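/- arXiv:2010.10463 — 4 statements merged into one kernel-verified Lean document; each statement's English description precedes it below -/
import Mathlib

section
/- Let q = p^f > 5 where p is an odd prime, and let α ≥ 2 be an integer. Then there do not exist ζ ∈ {±1} and ε ∈ {±1} such that p^f(p^f − ε) = 2^α(2^α − ζ) and (p^{2f} − 1)/2 = 2^α(2^α + ζ). -/
/-- Let `q = p^f > 5` with `p` an odd prime and `α ≥ 2`. There exist no signs
`ζ, ε ∈ {±1}` with `p^f (p^f − ε) = 2^α (2^α − ζ)` and `(p^{2f} − 1)/2 = 2^α (2^α + ζ)`. -/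
theorem stmt_2 (p : ℕ) (f α : ℕ) (hp : p.Prime) (hodd : Odd p) (hf : 1 ≤ f)
    (hq : 5 < p ^ f) (hα : 2 ≤ α) :
    ¬ ∃ ζ ε : ℤ, (ζ = 1 ∨ ζ = -1) ∧ (ε = 1 ∨ ε = -1) ∧
      (p : ℤ) ^ f * ((p : ℤ) ^ f - ε) = 2 ^ α * (2 ^ α - ζ) ∧
      ((p : ℤ) ^ (2 * f) - 1) = 2 * (2 ^ α * (2 ^ α + ζ)) := by
  rintro ⟨ζ, ε, hζ, hε, h1, h2⟩
  have h2f : ((p : ℤ)) ^ (2 * f) = (p : ℤ) ^ f * (p : ℤ) ^ f := by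
    rw [two_mul, pow_add]
  rw [h2f] at h2
  set q : ℤ := (p : ℤ) ^ f with hqdef
  set Q : ℤ := 2 ^ α with hQdef
  have hQ4 : (4 : ℤ) ≤ Q := by
    calc (4 : ℤ) = 2 ^ 2 := by norm_num
    _ ≤ 2 ^ α := pow_le_pow_right₀ (by norm_num) hα
  have hq7 : (7 : ℤ) ≤ q := by
    have hoddq : Odd (p ^ f) := hodd.pow
    obtain ⟨k, hk⟩ := hoddq
    have h7 : 7 ≤ p ^ f := by omega
    have : (7 : ℤ) ≤ ((p ^ f : ℕ) : ℤ) := by exact_mod_cast h7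
    simpa [hqdef] using this
  have key : ε * q = Q * Q + 3 * ζ * Q + 1 := by linear_combination h2 - h1
  rcases hε with rfl | rfl
  · rcases hζ with rfl | rfl
    · -- q = Q² + 3Q + 1, q(q-1) = Q(Q-1)
      nlinarith [h1, key, hQ4, hq7]
    · -- q = Q² - 3Q + 1, q(q-1) = Q(Q+1)
      have hQ5 : (5 : ℤ) ≤ Q := by nlinarith [key, hq7, hQ4]
      nlinarith [h1, key, hQ5, hq7, sq_nonneg (Q - 3)]
  · rcases hζ with rfl | rfl
    · nlinarith [key, hQ4, hq7]
    · nlinarith [key, hQ4, hq7]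
end

section
/- There is no prime power p^n with n ≥ 2 and p odd such that p^n = 2^f − 1 for some integer f ≥ 2. -/
/-- There is no odd prime power `p^n` with `n ≥ 2` such that `p^n = 2^f − 1` with `f ≥ 2`. -/
theorem stmt_5 : ¬ ∃ (p n f : ℕ), p.Prime ∧ Odd p ∧ 2 ≤ n ∧ 2 ≤ f ∧ p ^ n = 2 ^ f - 1 := by
  rintro ⟨p, n, f, hp, hodd, hn, hf, heq⟩
  have hpne2 : p ≠ 2 := by rintro rfl; exact ((by decide : ¬ Odd 2)) hodd
  have hp3 : 3 ≤ p := by have := hp.two_le; omega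
  have h4f : (4 : ℕ) ∣ 2 ^ f := by
    calc (4 : ℕ) = 2 ^ 2 := rfl
    _ ∣ 2 ^ f := pow_dvd_pow 2 hf
  have h2f4 : 4 ≤ 2 ^ f := Nat.le_of_dvd (by positivity) h4f
  have key : p ^ n + 1 = 2 ^ f := by omega
  rcases Nat.even_or_odd n with he | ho
  · -- n even: p^n is an odd square, ≡ 1 mod 4, but 2^f ≡ 0 mod 4
    obtain ⟨m, hm⟩ := he
    obtain ⟨t, ht⟩ := hodd.pow (n := m)
    have hsq : p ^ n = (2 * t + 1) ^ 2 := by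
      rw [hm, ← two_mul, mul_comm, pow_mul, ht]
    have : p ^ n = 4 * (t * t + t) + 1 := by rw [hsq]; ring
    omega
  · -- n odd
    -- p + 1 divides p^n + 1 = 2^f, so p + 1 = 2^k
    have hdvd : p + 1 ∣ 2 ^ f := by
      rw [← key]
      have := Odd.nat_add_dvd_pow_add_pow p 1 ho
      simpa using this
    obtain ⟨k, hkf, hpk⟩ := (Nat.dvd_prime_pow Nat.prime_two).mp hdvd
    have hk2 : 2 ≤ k := by
      by_contra h
      interval_cases k <;> omega
    -- f > k since p^n + 1 > p + 1
    have hpn : p + 1 < p ^ n + 1 := by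
      have : p ^ 1 < p ^ n := Nat.pow_lt_pow_right (by omega) (by omega)
      simpa using this
    have hkltf : k < f := by
      have : 2 ^ k < 2 ^ f := by omega
      exact (Nat.pow_lt_pow_iff_right (by norm_num)).mp this
    -- set R := 2^(k-1); then p = 2R - 1, and p^n + 1 ≡ 2R mod 4R, yet 4R ∣ p^n+1
    obtain ⟨j, rfl⟩ : ∃ j, k = j + 2 := ⟨k - 2, by omega⟩
    set R : ℤ := 2 ^ (j + 1) with hR
    have hRpos : (0 : ℤ) < R := by positivity
    have hpZ : (p : ℤ) = 2 * R - 1 := by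
      have : ((p : ℤ) + 1) = 2 ^ (j + 2) := by exact_mod_cast congrArg (Nat.cast : ℕ → ℤ) hpk
      rw [hR]; push_cast at this ⊢; linarith [this, pow_succ (2:ℤ) (j+1)]
    -- p^2 ≡ 1 [mod 4R]
    have hsq : (4 * R) ∣ (p : ℤ) ^ 2 - 1 := ⟨R - 1, by rw [hpZ]; ring⟩
    obtain ⟨m, hm⟩ := ho
    -- p^n ≡ p [mod 4R]
    have hpn2 : (p : ℤ) ^ n = ((p : ℤ) ^ 2) ^ m * p := by
      rw [hm, pow_add, pow_mul, pow_one]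
    have hpow : (4 * R) ∣ (p : ℤ) ^ n - p := by
      have h2 : (4 * R) ∣ ((p : ℤ) ^ 2) ^ m - 1 ^ m :=
        hsq.trans (sub_dvd_pow_sub_pow _ _ m)
      have h3 : (p : ℤ) ^ n - p = (((p : ℤ) ^ 2) ^ m - 1 ^ m) * p := by
        rw [hpn2]; ring
      rw [h3]; exact h2.mul_right p
    -- but 4R = 2^(j+3) divides 2^f = p^n + 1
    have hbig : (4 * R) ∣ (p : ℤ) ^ n + 1 := by
      have : (2 : ℤ) ^ (j + 3) ∣ 2 ^ f := pow_dvd_pow 2 (by omega)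
      have hkey : ((p : ℤ) ^ n + 1) = 2 ^ f := by exact_mod_cast congrArg (Nat.cast : ℕ → ℤ) key
      rw [hkey]
      convert this using 1
      rw [hR]; ring
    -- hence 4R ∣ 2R, contradiction
    have hfin : (4 * R) ∣ 2 * R := by
      have := dvd_sub hbig hpow
      have h4 : (p : ℤ) ^ n + 1 - ((p : ℤ) ^ n - p) = 2 * R := by rw [hpZ]; ring
      rwa [h4] at this
    have := Int.le_of_dvd (by positivity) hfin
    linarith
end

section
/- If p is an odd prime and n ≥ 2 an integer such that p^n = 2^f + 1 for some integer f ≥ 2, then p = 3, n = 2, and f = 3. -/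
/-- If `p` is an odd prime, `n ≥ 2`, `f ≥ 2` and `p^n = 2^f + 1`, then `p = 3`, `n = 2`, `f = 3`. -/
theorem stmt_6 (p n f : ℕ) (hp : p.Prime) (hodd : Odd p) (hn : 2 ≤ n) (hf : 2 ≤ f)
    (h : p ^ n = 2 ^ f + 1) : p = 3 ∧ n = 2 ∧ f = 3 := by
  have hp3 : 3 ≤ p := by
    rcases hodd with ⟨k, hk⟩
    have := hp.two_le
    omega
  -- Step 1: n is even
  set S : ℕ := ∑ i ∈ Finset.range n, p ^ i with hSdef
  have hS : S * (p - 1) = 2 ^ f := by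
    have hZ : (S : ℤ) * ((p : ℤ) - 1) = (2 : ℤ) ^ f := by
      push_cast [hSdef]
      rw [geom_sum_mul]
      have : ((p : ℤ)) ^ n = 2 ^ f + 1 := by exact_mod_cast h
      rw [this]; ring
    have hcast : ((p : ℤ) - 1) = ((p - 1 : ℕ) : ℤ) := by
      have : 1 ≤ p := hp.one_lt.le
      push_cast [this]; ring
    rw [hcast] at hZ
    exact_mod_cast hZ
  have hSdvd : S ∣ 2 ^ f := ⟨p - 1, hS.symm⟩
  have hSge : p + 1 ≤ S := by
    have h2 : Finset.range 2 ⊆ Finset.range n := Finset.range_subset_range.mpr hn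
    calc p + 1 = ∑ i ∈ Finset.range 2, p ^ i := by
          simp [Finset.sum_range_succ]; ring
    _ ≤ S := Finset.sum_le_sum_of_subset h2
  have hneven : Even n := by
    by_contra hne
    have hnodd : Odd n := Nat.odd_iff.mpr (Nat.not_even_iff.mp hne)
    have hSodd : Odd S := by
      rcases hodd with ⟨k, hk⟩
      have hterm : ∀ i ∈ Finset.range n, p ^ i % 2 = 1 := by
        intro i _
        exact Nat.odd_iff.mp ((Nat.odd_iff.mpr (by omega)).pow)
      rw [Nat.odd_iff, hSdef, Finset.sum_nat_mod, Finset.sum_congr rfl hterm]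
      simpa using Nat.odd_iff.mp hnodd
    have hcop : Nat.Coprime S 2 :=
      Nat.coprime_comm.mp (Nat.prime_two.coprime_iff_not_dvd.mpr
        (by have := Nat.odd_iff.mp hSodd; omega))
    have : S = 1 := (Nat.Coprime.pow_right f hcop).eq_one_of_dvd hSdvd
    omega
  obtain ⟨m, hm⟩ := hneven
  have hm1 : 1 ≤ m := by omega
  -- Step 2: x = p^m satisfies x^2 = 2^f + 1
  set x : ℕ := p ^ m with hxdef
  have hx2 : x ^ 2 = 2 ^ f + 1 := by
    rw [hxdef, ← pow_mul, show m * 2 = n by omega]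
    exact h
  have hx3 : 3 ≤ x := le_trans hp3 (Nat.le_self_pow (by omega) p)
  have hxodd : Odd x := hodd.pow
  obtain ⟨y, hxy⟩ : ∃ y, x = y + 1 := ⟨x - 1, by omega⟩
  rw [hxy] at hx2 hxodd hx3
  have hfac : y * (y + 2) = 2 ^ f := by nlinarith [hx2]
  have hy2 : 2 ≤ y := by omega
  have hyeven : y % 2 = 0 := by
    rcases hxodd with ⟨k, hk⟩; omega
  obtain ⟨a, ha, hya⟩ := (Nat.dvd_prime_pow Nat.prime_two).mp (⟨y + 2, hfac.symm⟩ : y ∣ 2 ^ f)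
  obtain ⟨b, hb, hyb⟩ := (Nat.dvd_prime_pow Nat.prime_two).mp
    (⟨y, by rw [mul_comm]; exact hfac.symm⟩ : (y + 2) ∣ 2 ^ f)
  have ha1 : 1 ≤ a := by
    rcases Nat.eq_zero_or_pos a with h0 | h1
    · simp [h0] at hya; omega
    · exact h1
  have hab : a < b := by
    have : (2:ℕ) ^ a < 2 ^ b := by omega
    exact (Nat.pow_lt_pow_iff_right (by norm_num)).mp this
  have hdvd2 : (2:ℕ) ^ a ∣ 2 := by
    have : (2:ℕ) ^ a ∣ 2 ^ b := Nat.pow_dvd_pow 2 hab.le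
    have h2 : (2:ℕ) ^ a ∣ (y + 2) - y := (Nat.dvd_sub (hyb ▸ this) ⟨1, by omega⟩)
    simpa using h2
  have ha1' : a = 1 := by
    have : (2:ℕ) ^ a ≤ 2 := Nat.le_of_dvd (by norm_num) hdvd2
    have : a ≤ 1 := by
      by_contra hc
      have : 2 ^ 2 ≤ 2 ^ a := Nat.pow_le_pow_right (by norm_num) (by omega)
      omega
    omega
  have hy : y = 2 := by rw [hya, ha1', pow_one]
  have hfval : 2 ^ f = 8 := by rw [← hfac, hy]
  have hf3 : f = 3 := by
    have : (2:ℕ) ^ f = 2 ^ 3 := by omega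
    exact Nat.pow_right_injective (le_refl 2) this
  have hpm : p ^ m = 3 := by rw [← hxdef, hxy, hy]
  have hpdvd : p ∣ 3 := hpm ▸ dvd_pow_self p (by omega : m ≠ 0)
  have hp3' : p = 3 := (Nat.prime_dvd_prime_iff_eq hp Nat.prime_three).mp hpdvd
  subst hp3'
  have hm' : m = 1 :=
    Nat.pow_right_injective (by norm_num) (by rw [pow_one]; exact hpm : (3:ℕ) ^ m = 3 ^ 1)
  exact ⟨rfl, by omega, hf3⟩
end

section
/- Suppose a finite group G acts on a finite module M (over a finite field) satisfying condition N_r, i.e., for every nonzero v ∈ M the stabilizer C_G(v) contains a Sylow r-subgroup of G as a normal subgroup, where r divides |G/C_G(M)|. Then (|M| − 1)/(|C_M(Q)| − 1) = n_r(G), the number of Sylow r-subgroups of G, where Q ∈ Syl_r(G). -/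
/-!
By `N_r`, every nonzero `v ∈ M` is fixed by exactly one Sylow `r`-subgroup of `G`: two Sylow
subgroups fixing `v` are Sylow subgroups of `C_G(v)`, which has a normal, hence unique, one.
So the nonzero vectors are partitioned by the sets `C_M(P) \ {0}`, `P ∈ Syl_r(G)`, all of size
`|C_M(Q)| - 1` because the Sylow subgroups are conjugate. Hence
`|M| - 1 = n_r(G) (|C_M(Q)| - 1)`, and `M ≠ 0` makes the divisor nonzero.
-/

open MulAction Pointwise

namespace MulAction

variable {G α : Type*} [Group G] [MulAction G α]

theorem mem_fixedPoints_subgroup_iff {H : Subgroup G} {a : α} :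
    a ∈ fixedPoints H α ↔ H ≤ stabilizer G a :=
  ⟨fun h g hg => h ⟨g, hg⟩, fun h g => h g.2⟩

theorem conj_smul_le_stabilizer_smul_iff {H : Subgroup G} (g : G) (a : α) :
    MulAut.conj g • H ≤ stabilizer G (g • a) ↔ H ≤ stabilizer G a := by
  rw [stabilizer_smul_eq_stabilizer_map_conj, Subgroup.pointwise_smul_def]
  exact Subgroup.map_le_map_iff_of_injective (MulAut.conj g).injective

theorem card_fixedPoints_conj_smul (H : Subgroup G) (g : G) :
    Nat.card (fixedPoints (MulAut.conj g • H : Subgroup G) α) = Nat.card (fixedPoints H α) :=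
  Nat.card_congr <| .symm <| (MulAction.toPerm g).subtypeEquiv fun a => by
    rw [mem_fixedPoints_subgroup_iff, mem_fixedPoints_subgroup_iff, toPerm_apply,
      conj_smul_le_stabilizer_smul_iff]

end MulAction

theorem Sylow.eq_of_le_of_normal_subgroupOf {G : Type*} [Group G] [Finite G] {p : ℕ}
    [Fact p.Prime] {H : Subgroup G} {Q P₁ P₂ : Sylow p G} (hQ : (Q : Subgroup G) ≤ H)
    (hQH : ((Q : Subgroup G).subgroupOf H).Normal)
    (h₁ : (P₁ : Subgroup G) ≤ H) (h₂ : (P₂ : Subgroup G) ≤ H) : P₁ = P₂ := by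
  have := Sylow.unique_of_normal (Q.subtype hQ) hQH
  exact Sylow.subtype_injective (Subsingleton.elim (P₁.subtype h₁) (P₂.subtype h₂))

def SatisfiesNr (r : ℕ) (G M : Type*) [Group G] [Zero M] [MulAction G M] : Prop :=
  ∀ v : M, v ≠ 0 → ∃ Q : Sylow r G,
    (Q : Subgroup G) ≤ stabilizer G v ∧ ((Q : Subgroup G).subgroupOf (stabilizer G v)).Normal

namespace SatisfiesNr

variable {r : ℕ} [Fact r.Prime] {G M : Type*} [Group G] [Finite G] [AddMonoid M]
  [DistribMulAction G M]

theorem existsUnique_mem_fixedPoints (h : SatisfiesNr r G M) {v : M} (hv : v ≠ 0) :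
    ∃! P : Sylow r G, v ∈ fixedPoints P M := by
  obtain ⟨Q, hQ, hQn⟩ := h v hv
  refine ⟨Q, mem_fixedPoints_subgroup_iff.mpr hQ, fun P hP => ?_⟩
  exact Sylow.eq_of_le_of_normal_subgroupOf hQ hQn (mem_fixedPoints_subgroup_iff.mp hP) hQ

open Finset in
theorem card_sub_one_eq [Finite M] (h : SatisfiesNr r G M) (Q : Sylow r G) :
    Nat.card M - 1 = Nat.card (Sylow r G) * (Nat.card (fixedPoints Q M) - 1) := by
  classical
  have := Fintype.ofFinite M
  have := Fintype.ofFinite (Sylow r G)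
  let s : Sylow r G → Finset M := fun P => (fixedPoints P M).toFinset.erase 0
  have hs : ∀ P, #(s P) = Nat.card (fixedPoints Q M) - 1 := by
    intro P
    obtain ⟨g, rfl⟩ := exists_smul_eq G Q P
    rw [card_erase_of_mem (by simp), Set.toFinset_card, ← Nat.card_eq_fintype_card,
      Sylow.coe_subgroup_smul, card_fixedPoints_conj_smul]
  have hcover : univ.erase (0 : M) = univ.biUnion s := by
    ext v
    simpa [s, and_comm] using fun hv => (h.existsUnique_mem_fixedPoints hv).exists
  have hdisj : ((univ : Finset (Sylow r G)) : Set (Sylow r G)).PairwiseDisjoint s := by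
    intro P₁ _ P₂ _ hne
    refine disjoint_left.mpr fun v h₁ h₂ => hne ?_
    simp only [s, mem_erase, Set.mem_toFinset] at h₁ h₂
    exact (h.existsUnique_mem_fixedPoints h₁.1).unique h₁.2 h₂.2
  rw [Nat.card_eq_fintype_card, ← card_univ, ← card_erase_of_mem (mem_univ 0), hcover,
    card_biUnion hdisj, sum_congr rfl fun P _ => hs P, sum_const, card_univ, smul_eq_mul,
    ← Nat.card_eq_fintype_card]

end SatisfiesNr

theorem DistribMulAction.nontrivial_of_ker_toAddAut_ne_top {G M : Type*} [Group G] [AddMonoid M]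
    [DistribMulAction G M] (h : (DistribMulAction.toAddAut G M).ker ≠ ⊤) : Nontrivial M := by
  contrapose! h
  exact eq_top_iff.mpr fun g _ => AddEquiv.ext fun _ => Subsingleton.elim _ _

theorem stmt_19_general
    (M : Type*) [AddCommGroup M] [Fintype M]
    (G : Type*) [Group G] [Fintype G]
    [DistribMulAction G M]
    (r : ℕ) (hr : r.Prime)
    (hdvd : r ∣ Nat.card (G ⧸ MonoidHom.ker (DistribMulAction.toAddAut G M)))
    (hNr : ∀ v : M, v ≠ 0 → ∃ Q : Sylow r G,
      (Q : Subgroup G) ≤ MulAction.stabilizer G v ∧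
      ((Q : Subgroup G).subgroupOf (MulAction.stabilizer G v)).Normal)
    (Q : Sylow r G) :
    (Nat.card M - 1) / (Nat.card (MulAction.fixedPoints (Q : Subgroup G) M) - 1)
      = Nat.card (Sylow r G) := by
  have : Fact r.Prime := ⟨hr⟩
  have hker : (DistribMulAction.toAddAut G M).ker ≠ ⊤ := by
    intro hker
    rw [hker] at hdvd
    exact hr.not_dvd_one (by simpa using hdvd)
  have : Nontrivial M := DistribMulAction.nontrivial_of_ker_toAddAut_ne_top hker
  have hcount : Nat.card M - 1 = Nat.card (Sylow r G) * (Nat.card (fixedPoints Q M) - 1) :=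
    SatisfiesNr.card_sub_one_eq hNr Q
  have hfixed : 0 < Nat.card (fixedPoints Q M) - 1 :=
    Nat.pos_of_mul_pos_left (hcount ▸ Nat.sub_pos_of_lt Finite.one_lt_card)
  rw [hcount, Nat.mul_div_cancel _ hfixed]

/-- Suppose a finite group `G` acts linearly on a finite module `M` over a finite field `F`,
`r` is a prime dividing `|G / C_G(M)|`, and the pair `(G, M)` satisfies condition `N_r`:
for every nonzero `v ∈ M` the stabilizer `C_G(v)` contains a Sylow `r`-subgroup of `G` as a
normal subgroup. Then `(|M| − 1)/(|C_M(Q)| − 1) = n_r(G)`, the number of Sylow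
`r`-subgroups of `G`, where `Q` is any Sylow `r`-subgroup of `G`. -/
theorem stmt_19 (F : Type*) [Field F] [Fintype F]
    (M : Type*) [AddCommGroup M] [Module F M] [Fintype M]
    (G : Type*) [Group G] [Fintype G]
    [DistribMulAction G M] [SMulCommClass G F M]
    (r : ℕ) (hr : r.Prime)
    (hdvd : r ∣ Nat.card (G ⧸ MonoidHom.ker (DistribMulAction.toAddAut G M)))
    (hNr : ∀ v : M, v ≠ 0 → ∃ Q : Sylow r G,
      (Q : Subgroup G) ≤ MulAction.stabilizer G v ∧
      ((Q : Subgroup G).subgroupOf (MulAction.stabilizer G v)).Normal)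
    (Q : Sylow r G) :
    (Nat.card M - 1) / (Nat.card (MulAction.fixedPoints (Q : Subgroup G) M) - 1)
      = Nat.card (Sylow r G) :=
  stmt_19_general M G r hr hdvd hNr Q
end
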